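/- With a graded basis λ₁,…,λₙ of M (orders κᵢ) and wⱼ(x) := λⱼ‖x−·‖^(2κⱼ), the Gram matrix G with entries G(i,j) = λᵢ(wⱼ) is block upper triangular with respect to the grouping by equal order: G(i,j) = 0 whenever κᵢ > κⱼ, and each diagonal block (λᵢ wⱼ : κᵢ = κⱼ = k) is invertible. Consequently G is invertible. -/
import Mathlib


open MvPolynomial Finset

noncomputable section

/-- The multi-index on the first (`x`) block of variables of a monomial in `Fin d ⊕ Fin d`. -/
def xpart {d : ℕ} (m : (Fin d ⊕ Fin d) →₀ ℕ) : Fin d →₀ ℕ :=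
  Finsupp.equivFunOnFinite.symm fun i => m (Sum.inl i)

/-- The multi-index on the second (`y`) block of variables. -/
def ypart {d : ℕ} (m : (Fin d ⊕ Fin d) →₀ ℕ) : Fin d →₀ ℕ :=
  Finsupp.equivFunOnFinite.symm fun i => m (Sum.inr i)

/-- `(l ⊗ m) f`: apply `l` in the `x`-variables and `m` in the `y`-variables of a
two-block polynomial `f`, via its canonical representation as a sum of products
of monomials in `x` and monomials in `y`. -/
def tensorApply {d : ℕ} (l m : Module.Dual ℝ (MvPolynomial (Fin d) ℝ))
    (f : MvPolynomial (Fin d ⊕ Fin d) ℝ) : ℝ :=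
  ∑ mo ∈ f.support, f.coeff mo * l (monomial (xpart mo) 1) * m (monomial (ypart mo) 1)

/-- Apply the linear functional `l` in the second (`y`) block of variables,
yielding a polynomial in the first (`x`) block of variables. -/
def applySecond {d : ℕ} (l : Module.Dual ℝ (MvPolynomial (Fin d) ℝ))
    (f : MvPolynomial (Fin d ⊕ Fin d) ℝ) : MvPolynomial (Fin d) ℝ :=
  ∑ mo ∈ f.support, monomial (xpart mo) (f.coeff mo * l (monomial (ypart mo) 1))

/-- The polynomial `(x,y) ↦ ‖x-y‖^(2k)` in the `2d` variables `x(1),…,x(d),y(1),…,y(d)`. -/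
def distPoly (d k : ℕ) : MvPolynomial (Fin d ⊕ Fin d) ℝ :=
  (∑ i : Fin d, (X (Sum.inl i) - X (Sum.inr i)) ^ 2) ^ k

/-- `l` vanishes on all polynomials of total degree `< k` (i.e. `l ⊥ Π_{<k}`). -/
def VanishesLT {d : ℕ} (l : Module.Dual ℝ (MvPolynomial (Fin d) ℝ)) (k : ℕ) : Prop :=
  ∀ p : MvPolynomial (Fin d) ℝ, p.totalDegree < k → l p = 0

/-- `l` vanishes on all polynomials of total degree `≤ k` (i.e. `l ⊥ Π_{≤k}`). -/
def VanishesLE {d : ℕ} (l : Module.Dual ℝ (MvPolynomial (Fin d) ℝ)) (k : ℕ) : Prop :=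
  ∀ p : MvPolynomial (Fin d) ℝ, p.totalDegree ≤ k → l p = 0

/-- `p_{a,β} : x ↦ ‖x‖^(2a) x^β` as a polynomial. -/
def pPoly (d : ℕ) (a : ℕ) (β : Fin d →₀ ℕ) : MvPolynomial (Fin d) ℝ :=
  (∑ i : Fin d, X i ^ 2) ^ a * monomial β 1

/-- `⊥Π_{<k}`: the subspace of linear functionals vanishing on all polynomials
of total degree `< k`. -/
def perpLT (d k : ℕ) : Submodule ℝ (Module.Dual ℝ (MvPolynomial (Fin d) ℝ)) where
  carrier := {l | VanishesLT l k}
  zero_mem' := fun _ _ => rfl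
  add_mem' := fun {a b} ha hb p hp => by
    simp [LinearMap.add_apply, ha p hp, hb p hp]
  smul_mem' := fun c l hl p hp => by
    simp [LinearMap.smul_apply, hl p hp]

/-- `Π_{<k}`: the subspace of polynomials of total degree `< k`. -/
def degLT (d k : ℕ) : Submodule ℝ (MvPolynomial (Fin d) ℝ) where
  carrier := {p | ∀ m ∈ p.support, (m.sum fun _ e => e) < k}
  zero_mem' := by simp
  add_mem' := fun {a b} ha hb m hm => by
    rcases Finset.mem_union.mp (MvPolynomial.support_add hm) with h | h
    · exact ha m h
    · exact hb m h
  smul_mem' := fun c p hp m hm => hp m (MvPolynomial.support_smul hm)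

variable {d : ℕ}
lemma xpart_apply (m : (Fin d ⊕ Fin d) →₀ ℕ) (i : Fin d) : xpart m i = m (Sum.inl i) := rfl
lemma ypart_apply (m : (Fin d ⊕ Fin d) →₀ ℕ) (i : Fin d) : ypart m i = m (Sum.inr i) := rfl

lemma tensorApply_superset {l m : Module.Dual ℝ (MvPolynomial (Fin d) ℝ)}
    {f : MvPolynomial (Fin d ⊕ Fin d) ℝ} {S : Finset ((Fin d ⊕ Fin d) →₀ ℕ)}
    (h : f.support ⊆ S) :
    tensorApply l m f =
      ∑ mo ∈ S, f.coeff mo * l (monomial (xpart mo) 1) * m (monomial (ypart mo) 1) := by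
  rw [tensorApply]
  apply Finset.sum_subset h
  intro mo _ hmo
  rw [MvPolynomial.notMem_support_iff.mp hmo]
  ring

lemma tensorApply_add (l m : Module.Dual ℝ (MvPolynomial (Fin d) ℝ))
    (f g : MvPolynomial (Fin d ⊕ Fin d) ℝ) :
    tensorApply l m (f + g) = tensorApply l m f + tensorApply l m g := by
  rw [tensorApply_superset (S := f.support ∪ g.support) MvPolynomial.support_add,
    tensorApply_superset (S := f.support ∪ g.support) subset_union_left,
    tensorApply_superset (S := f.support ∪ g.support) subset_union_right,
    ← Finset.sum_add_distrib]
  refine Finset.sum_congr rfl fun mo _ => ?_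
  rw [MvPolynomial.coeff_add]; ring

lemma tensorApply_smul (l m : Module.Dual ℝ (MvPolynomial (Fin d) ℝ))
    (c : ℝ) (f : MvPolynomial (Fin d ⊕ Fin d) ℝ) :
    tensorApply l m (c • f) = c * tensorApply l m f := by
  rw [tensorApply_superset (S := f.support) MvPolynomial.support_smul,
    tensorApply, Finset.mul_sum]
  refine Finset.sum_congr rfl fun mo _ => ?_
  rw [MvPolynomial.coeff_smul]; simp; ring

def tensorL (l m : Module.Dual ℝ (MvPolynomial (Fin d) ℝ)) :
    MvPolynomial (Fin d ⊕ Fin d) ℝ →ₗ[ℝ] ℝ where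
  toFun := tensorApply l m
  map_add' := tensorApply_add l m
  map_smul' := tensorApply_smul l m

lemma tensorApply_monomial (l m : Module.Dual ℝ (MvPolynomial (Fin d) ℝ))
    (mo : (Fin d ⊕ Fin d) →₀ ℕ) (c : ℝ) :
    tensorApply l m (monomial mo c) =
      c * l (monomial (xpart mo) 1) * m (monomial (ypart mo) 1) := by
  by_cases hc : c = 0
  · subst hc; simp [tensorApply]
  · rw [tensorApply, MvPolynomial.support_monomial, if_neg hc, Finset.sum_singleton,
      MvPolynomial.coeff_monomial, if_pos rfl]

lemma tensorApply_smul_right (l m : Module.Dual ℝ (MvPolynomial (Fin d) ℝ))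
    (c : ℝ) (f : MvPolynomial (Fin d ⊕ Fin d) ℝ) :
    tensorApply l (c • m) f = c * tensorApply l m f := by
  rw [tensorApply, tensorApply, Finset.mul_sum]
  refine Finset.sum_congr rfl fun mo _ => ?_
  simp [LinearMap.smul_apply]; ring

lemma tensorApply_sum_right (l : Module.Dual ℝ (MvPolynomial (Fin d) ℝ))
    {ι : Type*} (s : Finset ι) (c : ι → ℝ) (ms : ι → Module.Dual ℝ (MvPolynomial (Fin d) ℝ))
    (f : MvPolynomial (Fin d ⊕ Fin d) ℝ) :
    tensorApply l (∑ j ∈ s, c j • ms j) f = ∑ j ∈ s, c j * tensorApply l (ms j) f := by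
  rw [tensorApply]
  have h1 : ∀ mo, (∑ j ∈ s, c j • ms j) ((monomial (ypart mo : Fin d →₀ ℕ)) (1:ℝ)) =
      ∑ j ∈ s, c j * ms j (monomial (ypart mo) 1) := by
    intro mo; simp [LinearMap.sum_apply, LinearMap.smul_apply]
  simp_rw [h1, Finset.mul_sum]
  rw [Finset.sum_comm]
  refine Finset.sum_congr rfl fun j _ => ?_
  rw [tensorApply, Finset.mul_sum]
  refine Finset.sum_congr rfl fun mo _ => ?_
  ring

lemma tensorApply_sum_left {ι : Type*} (s : Finset ι) (c : ι → ℝ)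
    (ls : ι → Module.Dual ℝ (MvPolynomial (Fin d) ℝ))
    (m : Module.Dual ℝ (MvPolynomial (Fin d) ℝ)) (f : MvPolynomial (Fin d ⊕ Fin d) ℝ) :
    tensorApply (∑ j ∈ s, c j • ls j) m f = ∑ j ∈ s, c j * tensorApply (ls j) m f := by
  rw [tensorApply]
  have h1 : ∀ mo, (∑ j ∈ s, c j • ls j) ((monomial (xpart mo : Fin d →₀ ℕ)) (1:ℝ)) =
      ∑ j ∈ s, c j * ls j (monomial (xpart mo) 1) := by
    intro mo; simp [LinearMap.sum_apply, LinearMap.smul_apply]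
  simp_rw [h1, Finset.mul_sum, Finset.sum_mul]
  rw [Finset.sum_comm]
  refine Finset.sum_congr rfl fun j _ => ?_
  rw [tensorApply, Finset.mul_sum]
  refine Finset.sum_congr rfl fun mo _ => ?_
  ring

lemma tensorApply_finset_sum (l m : Module.Dual ℝ (MvPolynomial (Fin d) ℝ))
    {ι : Type*} (s : Finset ι) (f : ι → MvPolynomial (Fin d ⊕ Fin d) ℝ) :
    tensorApply l m (∑ i ∈ s, f i) = ∑ i ∈ s, tensorApply l m (f i) :=
  map_sum (tensorL l m) f s

lemma dual_apply_eq_sum (l : Module.Dual ℝ (MvPolynomial (Fin d) ℝ))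
    (p : MvPolynomial (Fin d) ℝ) :
    l p = ∑ mo ∈ p.support, coeff mo p * l (monomial mo 1) := by
  conv_lhs => rw [p.as_sum]
  rw [map_sum]
  refine Finset.sum_congr rfl fun mo _ => ?_
  have : (monomial mo) (coeff mo p) = (coeff mo p) • (monomial mo (1:ℝ)) := by
    rw [← map_smul, smul_eq_mul, mul_one]
  rw [this, map_smul, smul_eq_mul]

lemma xpart_combine (α β : Fin d →₀ ℕ) :
    xpart (Finsupp.mapDomain Sum.inl α + Finsupp.mapDomain Sum.inr β) = α := by
  ext i
  rw [xpart_apply, Finsupp.add_apply,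
    Finsupp.mapDomain_apply Sum.inl_injective,
    Finsupp.mapDomain_notin_range _ _ (by simp), add_zero]

lemma ypart_combine (α β : Fin d →₀ ℕ) :
    ypart (Finsupp.mapDomain Sum.inl α + Finsupp.mapDomain Sum.inr β) = β := by
  ext i
  rw [ypart_apply, Finsupp.add_apply,
    Finsupp.mapDomain_apply Sum.inr_injective,
    Finsupp.mapDomain_notin_range _ _ (by simp), zero_add]

lemma tensorApply_rename_mul (l m : Module.Dual ℝ (MvPolynomial (Fin d) ℝ))
    (g h : MvPolynomial (Fin d) ℝ) :
    tensorApply l m ((rename Sum.inl g) * (rename Sum.inr h)) = l g * m h := by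
  conv_lhs => rw [g.as_sum, h.as_sum, map_sum, map_sum, Finset.sum_mul_sum]
  have key : ∀ (α β : Fin d →₀ ℕ) (a b : ℝ),
      tensorApply l m ((rename Sum.inl (monomial α a)) * (rename Sum.inr (monomial β b))) =
      (a * l (monomial α 1)) * (b * m (monomial β 1)) := by
    intro α β a b
    rw [rename_monomial, rename_monomial, monomial_mul, tensorApply_monomial,
      xpart_combine, ypart_combine]
    ring
  calc tensorApply l m (∑ α ∈ g.support, ∑ β ∈ h.support,
        (rename Sum.inl (monomial α (coeff α g))) * (rename Sum.inr (monomial β (coeff β h))))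
      = ∑ α ∈ g.support, ∑ β ∈ h.support, (coeff α g * l (monomial α 1)) *
          (coeff β h * m (monomial β 1)) := by
        rw [tensorApply_finset_sum]
        refine Finset.sum_congr rfl fun α _ => ?_
        rw [tensorApply_finset_sum]
        exact Finset.sum_congr rfl fun β _ => key α β _ _
    _ = l g * m h := by
        rw [dual_apply_eq_sum l g, dual_apply_eq_sum m h, Finset.sum_mul_sum]

lemma apply_applySecond (l m : Module.Dual ℝ (MvPolynomial (Fin d) ℝ))
    (f : MvPolynomial (Fin d ⊕ Fin d) ℝ) :
    l (applySecond m f) = tensorApply l m f := by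
  rw [applySecond, map_sum, tensorApply]
  refine Finset.sum_congr rfl fun mo _ => ?_
  have : (monomial (xpart mo)) (coeff mo f * m (monomial (ypart mo) 1)) =
      (coeff mo f * m (monomial (ypart mo) 1)) • (monomial (xpart mo) (1:ℝ)) := by
    rw [← map_smul, smul_eq_mul, mul_one]
  rw [this, map_smul, smul_eq_mul]; ring

lemma distPoly_isHomogeneous (k : ℕ) : (distPoly d k).IsHomogeneous (2 * k) := by
  have h1 : (∑ i : Fin d, ((X (Sum.inl i) : MvPolynomial (Fin d ⊕ Fin d) ℝ)
      - X (Sum.inr i)) ^ 2).IsHomogeneous 2 := by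
    apply MvPolynomial.IsHomogeneous.sum
    intro i _
    exact ((isHomogeneous_X _ _).sub (isHomogeneous_X _ _)).pow 2
  have h2 := h1.pow k
  rw [distPoly]
  simpa [mul_comm] using h2

lemma degree_eq_of_mem_support_distPoly {k : ℕ} {mo : (Fin d ⊕ Fin d) →₀ ℕ}
    (h : mo ∈ (distPoly d k).support) :
    ((xpart mo).sum fun _ e => e) + ((ypart mo).sum fun _ e => e) = 2 * k := by
  have hdeg : mo.degree = 2 * k := by
    by_contra hne
    exact MvPolynomial.mem_support_iff.mp h
      ((distPoly_isHomogeneous (d := d) k).coeff_eq_zero hne)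
  rw [Finsupp.sum_fintype _ _ (fun _ => rfl), Finsupp.sum_fintype _ _ (fun _ => rfl)]
  have hdeg2 : mo.degree = ∑ u : Fin d ⊕ Fin d, mo u := by
    rw [Finsupp.degree]
    exact Finset.sum_subset (Finset.subset_univ _) (fun x _ hx => Finsupp.notMem_support_iff.mp hx)
  rw [← hdeg, hdeg2, Fintype.sum_sum_type]
  rfl

lemma vanishes_monomial {l : Module.Dual ℝ (MvPolynomial (Fin d) ℝ)} {k : ℕ}
    (hl : VanishesLT l k) {β : Fin d →₀ ℕ} (hβ : (β.sum fun _ e => e) < k) :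
    l (monomial β 1) = 0 := by
  apply hl
  exact lt_of_le_of_lt (MvPolynomial.totalDegree_monomial_le β 1) hβ

lemma triangular_zero {l m : Module.Dual ℝ (MvPolynomial (Fin d) ℝ)} {ki kj : ℕ}
    (hl : VanishesLT l ki) (hm : VanishesLT m kj) (hk : kj < ki) :
    tensorApply l m (distPoly d kj) = 0 := by
  rw [tensorApply]
  refine Finset.sum_eq_zero fun mo hmo => ?_
  have hdeg := degree_eq_of_mem_support_distPoly hmo
  by_cases hx : ((xpart mo).sum fun _ e => e) < ki
  · rw [vanishes_monomial hl hx]; ring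
  · have hy : ((ypart mo).sum fun _ e => e) < kj := by omega
    rw [vanishes_monomial hm hy]; ring

def qpoly (d : ℕ) : MvPolynomial (Fin d) ℝ := ∑ i : Fin d, X i ^ 2

lemma monomial_symm_eq_prod (g : Fin d → ℕ) :
    (monomial (Finsupp.equivFunOnFinite.symm g) (1:ℝ) : MvPolynomial (Fin d) ℝ) =
      ∏ i : Fin d, X i ^ g i := by
  rw [monomial_eq, C_1, one_mul, Finsupp.prod]
  rw [show (∏ i : Fin d, (X i:MvPolynomial (Fin d) ℝ) ^ g i) =
      ∏ i : Fin d, X i ^ (Finsupp.equivFunOnFinite.symm g) i from rfl]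
  refine Finset.prod_subset (Finset.subset_univ _) fun i _ hi => ?_
  have : (Finsupp.equivFunOnFinite.symm g) i = 0 := Finsupp.notMem_support_iff.mp hi
  rw [this, pow_zero]

lemma hB_expand (b : ℕ) :
    (∑ i : Fin d, X (Sum.inl i) * X (Sum.inr i) : MvPolynomial (Fin d ⊕ Fin d) ℝ) ^ b =
      ∑ f ∈ Finset.piAntidiag Finset.univ b,
        (Nat.multinomial Finset.univ f : MvPolynomial (Fin d ⊕ Fin d) ℝ) *
          (rename Sum.inl (monomial (Finsupp.equivFunOnFinite.symm f) 1) *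
           rename Sum.inr (monomial (Finsupp.equivFunOnFinite.symm f) 1)) := by
  rw [Finset.sum_pow_eq_sum_piAntidiag]
  refine Finset.sum_congr rfl fun f _ => ?_
  congr 1
  rw [monomial_symm_eq_prod, map_prod, map_prod, ← Finset.prod_mul_distrib]
  refine Finset.prod_congr rfl fun i _ => ?_
  rw [map_pow, map_pow, rename_X, rename_X, mul_pow]


def coeffR (d k a c : ℕ) (f : Fin d → ℕ) : ℝ :=
  (k.choose a : ℝ) * ((k - a).choose c : ℝ) * (-1) ^ (k - a - c) * 2 ^ (k - a - c) *
    (Nat.multinomial Finset.univ f : ℝ)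

lemma distPoly_expand (k : ℕ) :
    distPoly d k = ∑ a ∈ Finset.range (k + 1), ∑ c ∈ Finset.range (k - a + 1),
      ∑ f ∈ Finset.piAntidiag (Finset.univ : Finset (Fin d)) (k - a - c),
        coeffR d k a c f •
          (rename Sum.inl (pPoly d a (Finsupp.equivFunOnFinite.symm f)) *
           rename Sum.inr (pPoly d c (Finsupp.equivFunOnFinite.symm f))) := by
  have hsum : (∑ i : Fin d, ((X (Sum.inl i) : MvPolynomial (Fin d ⊕ Fin d) ℝ)
      - X (Sum.inr i)) ^ 2) =
      rename Sum.inl (qpoly d) + (rename Sum.inr (qpoly d) +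
        -(2 * ∑ i : Fin d, X (Sum.inl i) * X (Sum.inr i))) := by
    rw [qpoly, map_sum, map_sum]
    simp only [map_pow, rename_X, Finset.mul_sum, ← Finset.sum_neg_distrib,
      ← Finset.sum_add_distrib]
    refine Finset.sum_congr rfl fun i _ => ?_
    ring
  rw [distPoly, hsum, add_pow]
  refine Finset.sum_congr rfl fun a ha => ?_
  rw [add_pow]
  simp only [Finset.mul_sum, Finset.sum_mul]
  refine Finset.sum_congr rfl fun c hc => ?_
  have hneg : (-∑ i : Fin d, 2 * ((X (Sum.inl i) : MvPolynomial (Fin d ⊕ Fin d) ℝ)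
      * X (Sum.inr i))) ^ (k - a - c) =
      (-1) ^ (k - a - c) * 2 ^ (k - a - c) *
        (∑ i : Fin d, X (Sum.inl i) * X (Sum.inr i)) ^ (k - a - c) := by
    rw [← Finset.mul_sum, neg_pow, mul_pow]; ring
  rw [hneg, hB_expand]
  simp only [Finset.mul_sum, Finset.sum_mul]
  refine Finset.sum_congr rfl fun f hf => ?_
  rw [pPoly, pPoly, map_mul, map_mul, map_pow, map_pow, qpoly, map_sum, map_sum,
    MvPolynomial.smul_eq_C_mul, coeffR]
  simp only [map_mul, map_pow, map_neg, map_one, map_ofNat, map_natCast, rename_X,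
    MvPolynomial.C_pow, MvPolynomial.C_neg, MvPolynomial.C_1]
  ring

lemma tensorApply_distPoly (k : ℕ) (l m : Module.Dual ℝ (MvPolynomial (Fin d) ℝ)) :
    tensorApply l m (distPoly d k) =
      ∑ a ∈ Finset.range (k + 1), ∑ c ∈ Finset.range (k - a + 1),
        ∑ f ∈ Finset.piAntidiag (Finset.univ : Finset (Fin d)) (k - a - c),
          coeffR d k a c f * (l (pPoly d a (Finsupp.equivFunOnFinite.symm f)) *
            m (pPoly d c (Finsupp.equivFunOnFinite.symm f))) := by
  rw [distPoly_expand, tensorApply_finset_sum]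
  refine Finset.sum_congr rfl fun a _ => ?_
  rw [tensorApply_finset_sum]
  refine Finset.sum_congr rfl fun c _ => ?_
  rw [tensorApply_finset_sum]
  refine Finset.sum_congr rfl fun f _ => ?_
  rw [tensorApply_smul, tensorApply_rename_mul]

lemma pPoly_totalDegree_le (a : ℕ) (β : Fin d →₀ ℕ) :
    (pPoly d a β).totalDegree ≤ 2 * a + (β.sum fun _ e => e) := by
  refine le_trans (MvPolynomial.totalDegree_mul _ _) (add_le_add ?_ ?_)
  · refine le_trans (MvPolynomial.totalDegree_pow _ _) ?_
    have : (∑ i : Fin d, (X i : MvPolynomial (Fin d) ℝ) ^ 2).totalDegree ≤ 2 := by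
      refine le_trans (MvPolynomial.totalDegree_finset_sum _ _) ?_
      refine Finset.sup_le fun i _ => ?_
      refine le_trans (MvPolynomial.totalDegree_pow _ _) ?_
      rw [MvPolynomial.totalDegree_X]
    calc a * (∑ i : Fin d, (X i : MvPolynomial (Fin d) ℝ) ^ 2).totalDegree ≤ a * 2 :=
          Nat.mul_le_mul_left a this
      _ = 2 * a := by ring
  · exact MvPolynomial.totalDegree_monomial_le β 1

lemma symm_sum_eq {b : ℕ} {f : Fin d → ℕ} (hf : f ∈ Finset.piAntidiag Finset.univ b) :
    ((Finsupp.equivFunOnFinite.symm f).sum fun _ e => e) = b := by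
  rw [Finsupp.sum_fintype _ _ (fun _ => rfl)]
  exact (Finset.mem_piAntidiag.mp hf).1

lemma key_expansion (k : ℕ) {l m : Module.Dual ℝ (MvPolynomial (Fin d) ℝ)}
    (hl : VanishesLT l k) (hm : VanishesLT m k) :
    tensorApply l m (distPoly d k) =
      ∑ a ∈ Finset.range (k / 2 + 1),
        ∑ f ∈ Finset.piAntidiag (Finset.univ : Finset (Fin d)) (k - 2 * a),
          coeffR d k a a f * (l (pPoly d a (Finsupp.equivFunOnFinite.symm f)) *
            m (pPoly d a (Finsupp.equivFunOnFinite.symm f))) := by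
  rw [tensorApply_distPoly]
  have hkill : ∀ a ∈ Finset.range (k + 1), ∀ c ∈ Finset.range (k - a + 1), c ≠ a →
      (∑ f ∈ Finset.piAntidiag (Finset.univ : Finset (Fin d)) (k - a - c),
        coeffR d k a c f * (l (pPoly d a (Finsupp.equivFunOnFinite.symm f)) *
          m (pPoly d c (Finsupp.equivFunOnFinite.symm f)))) = 0 := by
    intro a ha c hc hne
    refine Finset.sum_eq_zero fun f hf => ?_
    have hfs := symm_sum_eq hf
    rcases lt_or_gt_of_ne hne with h | h
    · -- c < a : m-part vanishes
      have : m (pPoly d c (Finsupp.equivFunOnFinite.symm f)) = 0 := by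
        apply hm
        refine lt_of_le_of_lt (pPoly_totalDegree_le _ _) ?_
        rw [hfs]
        simp only [Finset.mem_range] at ha hc
        omega
      rw [this]; ring
    · -- a < c : l-part vanishes
      have : l (pPoly d a (Finsupp.equivFunOnFinite.symm f)) = 0 := by
        apply hl
        refine lt_of_le_of_lt (pPoly_totalDegree_le _ _) ?_
        rw [hfs]
        simp only [Finset.mem_range] at ha hc
        omega
      rw [this]; ring
  have hstep : ∀ a ∈ Finset.range (k + 1),
      (∑ c ∈ Finset.range (k - a + 1),
        ∑ f ∈ Finset.piAntidiag (Finset.univ : Finset (Fin d)) (k - a - c),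
          coeffR d k a c f * (l (pPoly d a (Finsupp.equivFunOnFinite.symm f)) *
            m (pPoly d c (Finsupp.equivFunOnFinite.symm f)))) =
      if 2 * a ≤ k then
        ∑ f ∈ Finset.piAntidiag (Finset.univ : Finset (Fin d)) (k - 2 * a),
          coeffR d k a a f * (l (pPoly d a (Finsupp.equivFunOnFinite.symm f)) *
            m (pPoly d a (Finsupp.equivFunOnFinite.symm f))) else 0 := by
    intro a ha
    by_cases h2a : 2 * a ≤ k
    · rw [if_pos h2a]
      have hmem : a ∈ Finset.range (k - a + 1) := by
        simp only [Finset.mem_range] at ha ⊢; omega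
      rw [Finset.sum_eq_single_of_mem a hmem (fun c hc hne => hkill a ha c hc hne)]
      have : k - a - a = k - 2 * a := by omega
      rw [this]
    · rw [if_neg h2a]
      refine Finset.sum_eq_zero fun c hc => ?_
      have hne : c ≠ a := by simp only [Finset.mem_range] at hc; omega
      exact hkill a ha c hc hne
  rw [Finset.sum_congr rfl hstep, ← Finset.sum_filter]
  refine Finset.sum_congr ?_ fun _ _ => rfl
  ext a
  simp only [Finset.mem_filter, Finset.mem_range]
  omega

lemma coeffR_diag_pos {k a : ℕ} (h2a : 2 * a ≤ k) (f : Fin d → ℕ) :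
    0 < (-1 : ℝ) ^ k * coeffR d k a a f := by
  rw [coeffR]
  have h1 : ((-1 : ℝ)) ^ (k - a - a) = (-1) ^ k := by
    have h3 : k = (k - 2 * a) + 2 * a := by omega
    have h2 : k - a - a = k - 2 * a := by omega
    rw [h2]
    conv_rhs => rw [h3]
    rw [pow_add, pow_mul]
    norm_num
  rw [h1]
  have h4 : (-1:ℝ)^k * ((k.choose a : ℝ) * ((k - a).choose a : ℝ) * (-1) ^ k *
      2 ^ (k - a - a) * (Nat.multinomial Finset.univ f : ℝ)) =
      ((-1:ℝ)^k * (-1)^k) * ((k.choose a : ℝ) * ((k - a).choose a : ℝ) *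
      2 ^ (k - a - a) * (Nat.multinomial Finset.univ f : ℝ)) := by ring
  rw [h4, ← pow_add, Even.neg_one_pow ⟨k, by ring⟩, one_mul]
  have hc1 : 0 < (k.choose a : ℝ) := by
    exact_mod_cast Nat.cast_pos.mpr (Nat.choose_pos (by omega))
  have hc2 : 0 < ((k - a).choose a : ℝ) := by
    exact_mod_cast Nat.cast_pos.mpr (Nat.choose_pos (by omega))
  have hc4 : 0 < (Nat.multinomial Finset.univ f : ℝ) := by
    exact_mod_cast Nat.cast_pos.mpr (Nat.multinomial_pos _ _)
  positivity

lemma mo_sum_le_totalDegree {p : MvPolynomial (Fin d) ℝ} {mo : Fin d →₀ ℕ}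
    (h : mo ∈ p.support) : (mo.sum fun _ e => e) ≤ p.totalDegree :=
  MvPolynomial.le_totalDegree h

lemma mu_vanishes_of_selfpair_zero {k : ℕ} {μ : Module.Dual ℝ (MvPolynomial (Fin d) ℝ)}
    (hμ : VanishesLT μ k) (hzero : tensorApply μ μ (distPoly d k) = 0) :
    VanishesLT μ (k + 1) := by
  have hexp := key_expansion k hμ hμ
  rw [hzero] at hexp
  -- multiply by (-1)^k
  have hsum0 : (∑ a ∈ Finset.range (k / 2 + 1),
      ∑ f ∈ Finset.piAntidiag (Finset.univ : Finset (Fin d)) (k - 2 * a),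
        ((-1:ℝ)^k * coeffR d k a a f) * (μ (pPoly d a (Finsupp.equivFunOnFinite.symm f)))^2) = 0 := by
    have heq : (∑ a ∈ Finset.range (k / 2 + 1),
        ∑ f ∈ Finset.piAntidiag (Finset.univ : Finset (Fin d)) (k - 2 * a),
          ((-1:ℝ)^k * coeffR d k a a f) * (μ (pPoly d a (Finsupp.equivFunOnFinite.symm f)))^2) =
        (-1:ℝ)^k * ∑ a ∈ Finset.range (k / 2 + 1),
        ∑ f ∈ Finset.piAntidiag (Finset.univ : Finset (Fin d)) (k - 2 * a),
          coeffR d k a a f * (μ (pPoly d a (Finsupp.equivFunOnFinite.symm f)) *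
            μ (pPoly d a (Finsupp.equivFunOnFinite.symm f))) := by
      rw [Finset.mul_sum]
      refine Finset.sum_congr rfl fun a _ => ?_
      rw [Finset.mul_sum]
      refine Finset.sum_congr rfl fun f _ => ?_
      ring
    rw [heq, ← hexp, mul_zero]
  have hterm : ∀ a ∈ Finset.range (k / 2 + 1),
      ∀ f ∈ Finset.piAntidiag (Finset.univ : Finset (Fin d)) (k - 2 * a),
      μ (pPoly d a (Finsupp.equivFunOnFinite.symm f)) = 0 := by
    intro a ha f hf
    have h2a : 2 * a ≤ k := by simp only [Finset.mem_range] at ha; omega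
    have hnn : ∀ a ∈ Finset.range (k / 2 + 1),
        0 ≤ ∑ f ∈ Finset.piAntidiag (Finset.univ : Finset (Fin d)) (k - 2 * a),
          ((-1:ℝ)^k * coeffR d k a a f) * (μ (pPoly d a (Finsupp.equivFunOnFinite.symm f)))^2 := by
      intro a' ha'
      refine Finset.sum_nonneg fun f' _ => ?_
      have h2a' : 2 * a' ≤ k := by simp only [Finset.mem_range] at ha'; omega
      exact mul_nonneg (le_of_lt (coeffR_diag_pos h2a' f')) (sq_nonneg _)
    have hina := (Finset.sum_eq_zero_iff_of_nonneg hnn).mp hsum0 a ha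
    have hinn : ∀ f' ∈ Finset.piAntidiag (Finset.univ : Finset (Fin d)) (k - 2 * a),
        0 ≤ ((-1:ℝ)^k * coeffR d k a a f') * (μ (pPoly d a (Finsupp.equivFunOnFinite.symm f')))^2 :=
      fun f' _ => mul_nonneg (le_of_lt (coeffR_diag_pos h2a f')) (sq_nonneg _)
    have := (Finset.sum_eq_zero_iff_of_nonneg hinn).mp hina f hf
    have hpos := coeffR_diag_pos (d := d) h2a f
    rcases mul_eq_zero.mp this with h | h
    · exact absurd h (ne_of_gt hpos)
    · exact pow_eq_zero_iff (by norm_num) |>.mp h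
  -- now conclude
  intro p hp
  rw [dual_apply_eq_sum]
  refine Finset.sum_eq_zero fun mo hmo => ?_
  have hle : (mo.sum fun _ e => e) ≤ k :=
    le_trans (mo_sum_le_totalDegree hmo) (by omega)
  rcases lt_or_eq_of_le hle with h | h
  · rw [vanishes_monomial hμ h]; ring
  · have h0 : (0:ℕ) ∈ Finset.range (k / 2 + 1) := by simp
    have hfmem : (⇑mo : Fin d → ℕ) ∈ Finset.piAntidiag (Finset.univ : Finset (Fin d)) (k - 2 * 0) := by
      rw [Finset.mem_piAntidiag]
      constructor
      · rw [show k - 2*0 = k by omega, ← h]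
        rw [Finsupp.sum_fintype _ _ (fun _ => rfl)]
      · intro i _; exact Finset.mem_univ i
    have := hterm 0 h0 (⇑mo) hfmem
    rw [pPoly, pow_zero, one_mul, Finsupp.equivFunOnFinite_symm_coe] at this
    rw [this]; ring

lemma sum_subtype_smul {n : ℕ} (P : Fin n → Prop) [DecidablePred P]
    {W : Type*} [AddCommGroup W] [Module ℝ W]
    (w : {i // P i} → ℝ) (u : Fin n → W) :
    ∑ i : {i // P i}, w i • u i.1 =
      ∑ i : Fin n, (if h : P i then w ⟨i, h⟩ else 0) • u i := by
  rw [← Finset.sum_filter_add_sum_filter_not Finset.univ P]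
  have h2 : ∑ i ∈ Finset.univ.filter (fun i => ¬ P i),
      (if h : P i then w ⟨i, h⟩ else 0) • u i = 0 := by
    refine Finset.sum_eq_zero fun i hi => ?_
    rw [dif_neg (Finset.mem_filter.mp hi).2, zero_smul]
  rw [h2, add_zero]
  rw [Finset.sum_subtype (p := P) (Finset.univ.filter P) (fun x => by simp)
    (fun i => (if h : P i then w ⟨i, h⟩ else 0) • u i)]
  refine Finset.sum_congr rfl fun i _ => ?_
  rw [dif_pos i.2]

/-- With a graded basis `λ₁,…,λₙ` of `M` (orders `κᵢ`) and `wⱼ(x) := λⱼ‖x−·‖^(2κⱼ)`, the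
Gram matrix `(λᵢ wⱼ)` is block upper triangular (its `(i,j)` entry vanishes when
`κᵢ > κⱼ`), each diagonal block `(λᵢ wⱼ : κᵢ = κⱼ = k)` is invertible, and consequently
the whole Gram matrix is invertible. -/
theorem schaback_gram_block_triangular (d n : ℕ)
    (M : Submodule ℝ (Module.Dual ℝ (MvPolynomial (Fin d) ℝ)))
    (hM : Module.finrank ℝ M = n)
    (lam : Fin n → Module.Dual ℝ (MvPolynomial (Fin d) ℝ))
    (hmem : ∀ i, lam i ∈ M)
    (κ : Fin n → ℕ)
    -- `κ i` is the order of `lam i`: the largest `k` with `lam i ⊥ Π_{<k}`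
    (horder : ∀ i, VanishesLT (lam i) (κ i) ∧ ¬ VanishesLT (lam i) (κ i + 1))
    -- the basis is graded: `i ↦ κ i` is nondecreasing and, for each `k`,
    -- `(lam i : κ i ≥ k)` is a basis of `M ∩ ⊥Π_{<k}`
    (hmono : Monotone κ)
    (hbasis : ∀ k : ℕ,
      LinearIndependent ℝ (fun i : {i : Fin n // k ≤ κ i} => lam i.1) ∧
      Submodule.span ℝ (Set.range fun i : {i : Fin n // k ≤ κ i} => lam i.1) =
        M ⊓ perpLT d k)
    : (∀ i j, κ j < κ i → lam i (applySecond (lam j) (distPoly d (κ j))) = 0) ∧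
      (∀ k : ℕ, IsUnit (Matrix.of fun i j : {i : Fin n // κ i = k} =>
        lam i.1 (applySecond (lam j.1) (distPoly d (κ j.1))))) ∧
      IsUnit (Matrix.of fun i j : Fin n =>
        lam i (applySecond (lam j) (distPoly d (κ j)))) := by
  classical
  have htri : ∀ i j, κ j < κ i → lam i (applySecond (lam j) (distPoly d (κ j))) = 0 := by
    intro i j h
    rw [apply_applySecond]
    exact triangular_zero (horder i).1 (horder j).1 h
  have hblock : ∀ k : ℕ, IsUnit (Matrix.of fun i j : {i : Fin n // κ i = k} =>
      lam i.1 (applySecond (lam j.1) (distPoly d (κ j.1)))) := by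
    intro k
    rw [Matrix.isUnit_iff_isUnit_det, isUnit_iff_ne_zero]
    intro hdet
    obtain ⟨v, hv0, hvG⟩ := Matrix.exists_mulVec_eq_zero_iff.mpr hdet
    set μ : Module.Dual ℝ (MvPolynomial (Fin d) ℝ) :=
      ∑ j : {i : Fin n // κ i = k}, v j • lam j.1 with hμdef
    have hμM : μ ∈ M :=
      Submodule.sum_mem M fun j _ => Submodule.smul_mem M _ (hmem j.1)
    have hμv : VanishesLT μ k := by
      intro p hp
      rw [hμdef]
      rw [LinearMap.sum_apply]
      refine Finset.sum_eq_zero fun j _ => ?_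
      rw [LinearMap.smul_apply, (horder j.1).1 p (by rw [j.2]; exact hp), smul_zero]
    have hpair : ∀ i : {i : Fin n // κ i = k},
        tensorApply (lam i.1) μ (distPoly d k) = 0 := by
      intro i
      rw [hμdef, tensorApply_sum_right]
      have := congrFun hvG i
      simp only [Matrix.mulVec, dotProduct, Pi.zero_apply] at this
      rw [← this]
      refine Finset.sum_congr rfl fun j _ => ?_
      rw [Matrix.of_apply]
      rw [show distPoly d (κ j.1) = distPoly d k from by rw [j.2], apply_applySecond]
      ring
    have hself : tensorApply μ μ (distPoly d k) = 0 := by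
      have h1 := tensorApply_sum_left (Finset.univ) v (fun j : {i : Fin n // κ i = k} => lam j.1)
        μ (distPoly d k)
      rw [← hμdef] at h1
      rw [h1]
      exact Finset.sum_eq_zero fun i _ => by rw [hpair i, mul_zero]
    have hμv1 : VanishesLT μ (k + 1) := mu_vanishes_of_selfpair_zero hμv hself
    have hμspan : μ ∈ Submodule.span ℝ
        (Set.range fun i : {i : Fin n // k + 1 ≤ κ i} => lam i.1) := by
      rw [(hbasis (k+1)).2]
      exact ⟨hμM, hμv1⟩
    obtain ⟨c, hc⟩ := (Submodule.mem_span_range_iff_exists_fun ℝ).mp hμspan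
    set V : Fin n → ℝ := fun i => if h : κ i = k then v ⟨i, h⟩ else 0 with hV
    set Cc : Fin n → ℝ := fun i => if h : k + 1 ≤ κ i then c ⟨i, h⟩ else 0 with hCc
    have hμ1 : μ = ∑ i : Fin n, V i • lam i := by
      rw [hμdef, sum_subtype_smul (fun i => κ i = k) v lam]
    have hμ2 : μ = ∑ i : Fin n, Cc i • lam i := by
      rw [← hc, sum_subtype_smul (fun i => k + 1 ≤ κ i) c lam]
    have hg : ∑ i : {i : Fin n // k ≤ κ i}, (V i.1 - Cc i.1) • lam i.1 = 0 := by
      rw [sum_subtype_smul (fun i => k ≤ κ i) (fun i => V i.1 - Cc i.1) lam]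
      have : ∀ i : Fin n, (if h : k ≤ κ i then V i - Cc i else 0) • lam i =
          (V i - Cc i) • lam i := by
        intro i
        by_cases h : k ≤ κ i
        · rw [dif_pos h]
        · rw [dif_neg h]
          have e1 : V i = 0 := dif_neg (show ¬ κ i = k from fun he => h (le_of_eq he.symm))
          have e2 : Cc i = 0 := dif_neg (show ¬ k + 1 ≤ κ i from
            fun hle => h (le_trans (Nat.le_succ k) hle))
          rw [e1, e2, sub_zero, zero_smul]
      rw [Finset.sum_congr rfl fun i _ => this i]
      have hsplit : ∑ i : Fin n, (V i - Cc i) • lam i =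
          (∑ i : Fin n, V i • lam i) - ∑ i : Fin n, Cc i • lam i := by
        rw [← Finset.sum_sub_distrib]
        exact Finset.sum_congr rfl fun i _ => sub_smul (V i) (Cc i) (lam i)
      rw [hsplit, ← hμ1, ← hμ2, sub_self]
    have hgz := Fintype.linearIndependent_iff.mp (hbasis k).1
      (fun i => V i.1 - Cc i.1) hg
    obtain ⟨j₀, hj₀⟩ := Function.ne_iff.mp hv0
    have h5 := hgz ⟨j₀.1, le_of_eq j₀.2.symm⟩
    have hk0 : κ j₀.1 = k := j₀.2
    have hnle : ¬ k + 1 ≤ κ j₀.1 := by omega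
    simp only [hV, hCc, dif_pos hk0, dif_neg hnle, sub_zero] at h5
    exact hj₀ h5
  refine ⟨htri, hblock, ?_⟩
  rw [Matrix.isUnit_iff_isUnit_det, isUnit_iff_ne_zero]
  intro hdet
  obtain ⟨v, hv0, hvG⟩ := Matrix.exists_mulVec_eq_zero_iff.mpr hdet
  set S : Finset (Fin n) := Finset.univ.filter (fun j => v j ≠ 0) with hS
  have hSne : S.Nonempty := by
    obtain ⟨j₀, hj₀⟩ := Function.ne_iff.mp hv0
    exact ⟨j₀, Finset.mem_filter.mpr ⟨Finset.mem_univ _, hj₀⟩⟩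
  set k : ℕ := (S.image κ).max' (hSne.image κ) with hk
  obtain ⟨j₀, hj₀S, hj₀k⟩ := Finset.mem_image.mp ((S.image κ).max'_mem (hSne.image κ))
  have hmax : ∀ j, v j ≠ 0 → κ j ≤ k := fun j hj =>
    Finset.le_max' _ _ (Finset.mem_image_of_mem κ
      (Finset.mem_filter.mpr ⟨Finset.mem_univ _, hj⟩))
  have hvj₀ : v j₀ ≠ 0 := by
    have := Finset.mem_filter.mp hj₀S
    exact this.2
  set w : {i : Fin n // κ i = k} → ℝ := fun j => v j.1 with hw
  have hw0 : w ≠ 0 := Function.ne_iff.mpr ⟨⟨j₀, hj₀k⟩, hvj₀⟩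
  have hGkw : (Matrix.of fun i j : {i : Fin n // κ i = k} =>
      lam i.1 (applySecond (lam j.1) (distPoly d (κ j.1)))).mulVec w = 0 := by
    funext i
    have hfull := congrFun hvG i.1
    simp only [Matrix.mulVec, dotProduct, Pi.zero_apply, Matrix.of_apply] at hfull ⊢
    have hsplit : (∑ j : Fin n, lam i.1 (applySecond (lam j) (distPoly d (κ j))) * v j) =
        ∑ j ∈ Finset.univ.filter (fun j => κ j = k),
          lam i.1 (applySecond (lam j) (distPoly d (κ j))) * v j := by
      symm
      refine Finset.sum_subset (Finset.filter_subset _ _) ?_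
      intro j _ hj
      simp only [Finset.mem_filter, Finset.mem_univ, true_and] at hj
      rcases lt_or_gt_of_ne hj with h | h
      · rw [htri i.1 j (by rw [i.2]; exact h), zero_mul]
      · have : v j = 0 := by
          by_contra hvj
          exact absurd (hmax j hvj) (not_le.mpr h)
        rw [this, mul_zero]
    have hsub : (∑ j ∈ Finset.univ.filter (fun j => κ j = k),
          lam i.1 (applySecond (lam j) (distPoly d (κ j))) * v j) =
        ∑ j : {i : Fin n // κ i = k},
          lam i.1 (applySecond (lam j.1) (distPoly d (κ j.1))) * w j := by
      rw [Finset.sum_subtype (p := fun i => κ i = k) _ (fun x => by simp)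
        (fun j => lam i.1 (applySecond (lam j) (distPoly d (κ j))) * v j)]
    rw [← hsub, ← hsplit]
    exact hfull
  have hdet0 := Matrix.exists_mulVec_eq_zero_iff.mp ⟨w, hw0, hGkw⟩
  have := (Matrix.isUnit_iff_isUnit_det _).mp (hblock k)
  rw [hdet0] at this
  exact (isUnit_iff_ne_zero.mp this) rfl
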